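/- arXiv:1505.02098 — 6 statements merged into one kernel-verified Lean document; each statement's English description precedes it below -/
import Mathlib

section
/- Assume additionally that the metrics are strictly increasing: m_1 < m_2 < … < m_n. Let x* be a maximizer of f on C with x* ≠ 0, and let i_o = max{ i : x*_i > 0 }. Then x*_i = 1 for every i < i_o and x*_i = 0 for every i > i_o. Moreover, if 1/(1 + S_0 + Σ_{p=1}^{i_o} S_p) ≥ m_{i_o} then x*_{i_o} = 1, and otherwise x*_{i_o} = (1/m_{i_o} − (1 + S_0 + Σ_{p=1}^{i_o−1} S_p))/S_{i_o}, which lies in the open interval (0,1). -/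
/-!
Moving one coordinate of the maximizer x inside [0,1] cannot increase f, so the partial derivative
ωβ S_i / g(x) - (λ + β ψ_i) is ≤ 0 where x_i < 1 and ≥ 0 where x_i > 0; that is,
1/g(x) ≤ m_i where x_i < 1 and m_i ≤ 1/g(x) where x_i > 0. A coordinate i < i_o with x_i < 1
would give m_{i_o} ≤ 1/g(x) ≤ m_i < m_{i_o}. Hence g(x) = 1 + S_0 + Σ_{p<i_o} S_p + S_{i_o} x_{i_o},
and x_{i_o} is either 1 or interior, where the two conditions force 1/g(x) = m_{i_o}.
-/

open Finset Function Real

theorem IsMaxOn.hasDerivAt_nonpos {φ : ℝ → ℝ} {a b t φ' : ℝ} (h : IsMaxOn φ (Set.Icc a b) t)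
    (hat : a ≤ t) (htb : t < b) (hφ : HasDerivAt φ φ' t) : φ' ≤ 0 := by
  have hcone : b - t ∈ posTangentConeAt (Set.Icc a b) t :=
    sub_mem_posTangentConeAt_of_segment_subset <| by
      rw [segment_eq_Icc htb.le]; exact Set.Icc_subset_Icc_left hat
  have := h.localize.hasFDerivWithinAt_nonpos hφ.hasFDerivAt.hasFDerivWithinAt hcone
  simp only [ContinuousLinearMap.toSpanSingleton_apply, smul_eq_mul] at this
  nlinarith

theorem IsMaxOn.hasDerivAt_nonneg {φ : ℝ → ℝ} {a b t φ' : ℝ} (h : IsMaxOn φ (Set.Icc a b) t)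
    (hat : a < t) (htb : t ≤ b) (hφ : HasDerivAt φ φ' t) : 0 ≤ φ' := by
  have hcone : a - t ∈ posTangentConeAt (Set.Icc a b) t :=
    sub_mem_posTangentConeAt_of_segment_subset <| by
      rw [segment_symm, segment_eq_Icc hat.le]; exact Set.Icc_subset_Icc_right htb
  have := h.localize.hasFDerivWithinAt_nonpos hφ.hasFDerivAt.hasFDerivWithinAt hcone
  simp only [ContinuousLinearMap.toSpanSingleton_apply, smul_eq_mul] at this
  nlinarith

theorem hasDerivAt_log_affine {A G s C c t₀ : ℝ} (hG : G ≠ 0) :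
    HasDerivAt (fun t => A * log (G + s * (t - t₀)) - (C + c * (t - t₀))) (A * s / G - c) t₀ := by
  have h1 : HasDerivAt (fun t => G + s * (t - t₀)) s t₀ := by
    simpa using ((hasDerivAt_id t₀).sub_const t₀).const_mul s |>.const_add G
  have h2 : HasDerivAt (fun t => C + c * (t - t₀)) c t₀ := by
    simpa using ((hasDerivAt_id t₀).sub_const t₀).const_mul c |>.const_add C
  refine (((h1.log (by simpa using hG)).const_mul A).sub h2).congr_deriv ?_
  rw [sub_self, mul_zero, add_zero, mul_div_assoc]

section UnitBox

variable {ι : Type*} [DecidableEq ι]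

theorem update_mem_unitBox {x : ι → ℝ} (hx : ∀ j, x j ∈ Set.Icc (0:ℝ) 1) (i : ι) {t : ℝ}
    (ht : t ∈ Set.Icc (0:ℝ) 1) (j : ι) : update x i t j ∈ Set.Icc (0:ℝ) 1 := by
  rcases eq_or_ne j i with rfl | hji
  · rwa [update_self]
  · rw [update_of_ne hji]; exact hx j

theorem isMaxOn_update_of_le_unitBox {F : (ι → ℝ) → ℝ} {x : ι → ℝ}
    (hx : ∀ j, x j ∈ Set.Icc (0:ℝ) 1)
    (hmax : ∀ y : ι → ℝ, (∀ j, y j ∈ Set.Icc (0:ℝ) 1) → F y ≤ F x) (i : ι) :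
    IsMaxOn (fun t => F (update x i t)) (Set.Icc 0 1) (x i) :=
  isMaxOn_iff.mpr fun t ht => by
    simpa only [update_eq_self] using hmax _ (update_mem_unitBox hx i ht)

end UnitBox

theorem sum_mul_eq_sum_Iio_add {ι : Type*} [Fintype ι] [LinearOrder ι] [LocallyFiniteOrderBot ι]
    (S x : ι → ℝ) (k : ι) (hlt : ∀ j < k, x j = 1) (hgt : ∀ j, k < j → x j = 0) :
    ∑ j, S j * x j = ∑ j ∈ Iio k, S j + S k * x k := by
  rw [← sum_subset (subset_univ (Iic k)) fun j _ hj => by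
      rw [hgt j (not_le.mp (mt mem_Iic.mpr hj)), mul_zero],
    ← Iio_insert, sum_insert notMem_Iio_self, add_comm]
  congr 1
  exact sum_congr rfl fun j hj => by rw [hlt j (mem_Iio.mp hj), mul_one]

section Aperture

variable {ι : Type*} [Fintype ι]

noncomputable def apertureGain (S0 : ℝ) (S x : ι → ℝ) : ℝ := 1 + S0 + ∑ i, S i * x i

noncomputable def apertureObjective (ω β lam S0 : ℝ) (S ψ x : ι → ℝ) : ℝ :=
  ω * β * log (apertureGain S0 S x) - ∑ i, (lam + β * ψ i) * x i

noncomputable def apertureMetric (ω β lam : ℝ) (S ψ : ι → ℝ) (i : ι) : ℝ :=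
  (β * ψ i + lam) / (ω * β * S i)

variable {ω β lam S0 : ℝ} {S ψ x : ι → ℝ}

theorem apertureGain_pos (hS0 : 0 ≤ S0) (hS : ∀ i, 0 ≤ S i) (hx : ∀ i, 0 ≤ x i) :
    0 < apertureGain S0 S x := by
  have := sum_nonneg fun j (_ : j ∈ univ) => mul_nonneg (hS j) (hx j)
  unfold apertureGain
  linarith

variable [DecidableEq ι]

theorem sum_mul_update (w x : ι → ℝ) (i : ι) (t : ℝ) :
    ∑ j, w j * update x i t j = ∑ j, w j * x j + w i * (t - x i) := by
  simp only [Pi.update_eq_sub_add_single, Pi.add_apply, Pi.sub_apply, Pi.single_apply, mul_add,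
    mul_sub, mul_ite, mul_zero, sum_add_distrib, sum_sub_distrib, sum_ite_eq', mem_univ, if_true]
  ring

theorem hasDerivAt_apertureObjective_update (hx : apertureGain S0 S x ≠ 0) (i : ι) :
    HasDerivAt (fun t => apertureObjective ω β lam S0 S ψ (update x i t))
      (ω * β * S i / apertureGain S0 S x - (lam + β * ψ i)) (x i) := by
  have hline : ∀ t, apertureObjective ω β lam S0 S ψ (update x i t) =
      ω * β * log (apertureGain S0 S x + S i * (t - x i)) -
        (∑ j, (lam + β * ψ j) * x j + (lam + β * ψ i) * (t - x i)) := fun t => by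
    simp only [apertureObjective, apertureGain, sum_mul_update, ← add_assoc]
  simpa only [hline] using hasDerivAt_log_affine hx

theorem inv_apertureGain_le_apertureMetric (hω : 0 < ω) (hβ : 0 < β) (hS0 : 0 ≤ S0)
    (hS : ∀ i, 0 < S i) (hx : ∀ i, x i ∈ Set.Icc (0:ℝ) 1)
    (hmax : ∀ y, (∀ i, y i ∈ Set.Icc (0:ℝ) 1) →
      apertureObjective ω β lam S0 S ψ y ≤ apertureObjective ω β lam S0 S ψ x)
    (i : ι) (hi : x i < 1) : 1 / apertureGain S0 S x ≤ apertureMetric ω β lam S ψ i := by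
  have hG := apertureGain_pos hS0 (fun j => (hS j).le) fun j => (hx j).1
  have := (div_le_iff₀ hG).mp <| sub_nonpos.mp <|
    (isMaxOn_update_of_le_unitBox hx hmax i).hasDerivAt_nonpos (hx i).1 hi
      (hasDerivAt_apertureObjective_update hG.ne' i)
  rw [apertureMetric, div_le_div_iff₀ hG (by have := hS i; positivity)]
  linarith

theorem apertureMetric_le_inv_apertureGain (hω : 0 < ω) (hβ : 0 < β) (hS0 : 0 ≤ S0)
    (hS : ∀ i, 0 < S i) (hx : ∀ i, x i ∈ Set.Icc (0:ℝ) 1)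
    (hmax : ∀ y, (∀ i, y i ∈ Set.Icc (0:ℝ) 1) →
      apertureObjective ω β lam S0 S ψ y ≤ apertureObjective ω β lam S0 S ψ x)
    (i : ι) (hi : 0 < x i) : apertureMetric ω β lam S ψ i ≤ 1 / apertureGain S0 S x := by
  have hG := apertureGain_pos hS0 (fun j => (hS j).le) fun j => (hx j).1
  have := (le_div_iff₀ hG).mp <| sub_nonneg.mp <|
    (isMaxOn_update_of_le_unitBox hx hmax i).hasDerivAt_nonneg hi (hx i).2
      (hasDerivAt_apertureObjective_update hG.ne' i)
  rw [apertureMetric, div_le_div_iff₀ (by have := hS i; positivity) hG]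
  linarith

end Aperture

theorem aperture_structure_strict_mono_general
    (n : ℕ)
    (ω β lam S0 : ℝ) (hω : 0 < ω) (hβ : 0 < β) (hS0 : 0 ≤ S0)
    (S ψ : Fin n → ℝ) (hS : ∀ i, 0 < S i)
    (g f : (Fin n → ℝ) → ℝ)
    (hg : ∀ x, g x = 1 + S0 + ∑ i, S i * x i)
    (hf : ∀ x, f x = ω * β * Real.log (g x) - ∑ i, (lam + β * ψ i) * x i)
    (m : Fin n → ℝ) (hm : ∀ i, m i = (β * ψ i + lam) / (ω * β * S i))
    (hmono : StrictMono m)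
    (x : Fin n → ℝ)
    (hxC : ∀ i, x i ∈ Set.Icc (0:ℝ) 1)
    (hxmax : ∀ y : Fin n → ℝ, (∀ i, y i ∈ Set.Icc (0:ℝ) 1) → f y ≤ f x)
    (io : Fin n)
    (hio_pos : 0 < x io)
    (hio_max : ∀ i, 0 < x i → i ≤ io) :
    (∀ i, i < io → x i = 1) ∧
    (∀ i, io < i → x i = 0) ∧
    (m io ≤ 1 / (1 + S0 + ∑ p ∈ Finset.Iic io, S p) → x io = 1) ∧
    (1 / (1 + S0 + ∑ p ∈ Finset.Iic io, S p) < m io →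
      x io = (1 / m io - (1 + S0 + ∑ p ∈ Finset.Iio io, S p)) / S io ∧
      x io ∈ Set.Ioo (0:ℝ) 1) := by
  obtain rfl : g = apertureGain S0 S := funext hg
  obtain rfl : f = apertureObjective ω β lam S0 S ψ := funext hf
  obtain rfl : m = apertureMetric ω β lam S ψ := funext hm
  have hG := apertureGain_pos hS0 (fun j => (hS j).le) fun j => (hxC j).1
  have hup := inv_apertureGain_le_apertureMetric hω hβ hS0 hS hxC hxmax
  have hdown := apertureMetric_le_inv_apertureGain hω hβ hS0 hS hxC hxmax
  have hbelow : ∀ i, i < io → x i = 1 := fun i hi =>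
    (hxC i).2.eq_or_lt.resolve_right fun hlt =>
      (hmono hi).not_ge ((hdown io hio_pos).trans (hup i hlt))
  have habove : ∀ i, io < i → x i = 0 := fun i hi =>
    ((hxC i).1.eq_or_lt.resolve_right fun hpos => (hio_max i hpos).not_gt hi).symm
  have hG_eq : apertureGain S0 S x = 1 + S0 + ∑ p ∈ Iio io, S p + S io * x io := by
    rw [apertureGain, sum_mul_eq_sum_Iio_add S x io hbelow habove, ← add_assoc]
  have hIic : ∑ p ∈ Iic io, S p = ∑ p ∈ Iio io, S p + S io := by
    rw [← Iio_insert, sum_insert notMem_Iio_self, add_comm]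
  refine ⟨hbelow, habove, fun hth => ?_, fun hth => ?_⟩
  · refine (hxC io).2.eq_or_lt.resolve_right fun hlt => ?_
    have hG_lt : apertureGain S0 S x < 1 + S0 + ∑ p ∈ Iic io, S p := by
      rw [hG_eq, hIic]
      linarith [mul_lt_of_lt_one_right (hS io) hlt]
    exact (one_div_lt_one_div_of_lt hG hG_lt).not_ge ((hup io hlt).trans hth)
  · have hlt : x io < 1 := (hxC io).2.lt_of_ne fun h1 => by
      have hG_full : apertureGain S0 S x = 1 + S0 + ∑ p ∈ Iic io, S p := by
        rw [hG_eq, hIic, h1, mul_one, add_assoc]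
      exact (hdown io hio_pos).not_gt (hG_full ▸ hth)
    refine ⟨?_, hio_pos, hlt⟩
    rw [(hdown io hio_pos).antisymm (hup io hlt), one_div_one_div, hG_eq, eq_div_iff (hS io).ne']
    ring

theorem aperture_structure_strict_mono
    (n : ℕ) (hn : 1 ≤ n)
    (ω β lam S0 : ℝ) (hω : 0 < ω) (hβ : 0 < β) (hlam : 0 ≤ lam) (hS0 : 0 ≤ S0)
    (S ψ : Fin n → ℝ) (hS : ∀ i, 0 < S i) (hψ : ∀ i, 0 ≤ ψ i)
    (g f : (Fin n → ℝ) → ℝ)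
    (hg : ∀ x, g x = 1 + S0 + ∑ i, S i * x i)
    (hf : ∀ x, f x = ω * β * Real.log (g x) - ∑ i, (lam + β * ψ i) * x i)
    (m : Fin n → ℝ) (hm : ∀ i, m i = (β * ψ i + lam) / (ω * β * S i))
    (hmono : StrictMono m)
    (x : Fin n → ℝ)
    (hxC : ∀ i, x i ∈ Set.Icc (0:ℝ) 1)
    (hxmax : ∀ y : Fin n → ℝ, (∀ i, y i ∈ Set.Icc (0:ℝ) 1) → f y ≤ f x)
    (hxne : x ≠ 0)
    (io : Fin n)
    (hio_pos : 0 < x io)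
    (hio_max : ∀ i, 0 < x i → i ≤ io) :
    (∀ i, i < io → x i = 1) ∧
    (∀ i, io < i → x i = 0) ∧
    (m io ≤ 1 / (1 + S0 + ∑ p ∈ Finset.Iic io, S p) → x io = 1) ∧
    (1 / (1 + S0 + ∑ p ∈ Finset.Iic io, S p) < m io →
      x io = (1 / m io - (1 + S0 + ∑ p ∈ Finset.Iio io, S p)) / S io ∧
      x io ∈ Set.Ioo (0:ℝ) 1) :=
  aperture_structure_strict_mono_general n ω β lam S0 hω hβ hS0 S ψ hS g f hg hf m hm hmono x hxC
    hxmax io hio_pos hio_max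
end

section
/- If the metrics m_1, …, m_n are pairwise distinct, then any maximizer x* of f on C has at most one coordinate taking a value in the open interval (0,1); all other coordinates equal 0 or 1. -/
/-!
The objective has the form `φ (∑ k, S k * x k) - ∑ k, c k * x k`. If two coordinates `i ≠ j`
are fractional, move `t / S i` into coordinate `i` and `t / S j` out of coordinate `j`: this
keeps `∑ k, S k * x k`, hence the concave part, unchanged and changes the linear cost by
`t * (c i / S i - c j / S j)`, where `c k / S k = ω β m k`. Taking `t > 0` small enough to stay
in the box, with `i` the coordinate of smaller metric, strictly increases the objective; so at a
maximizer two fractional coordinates would have equal metrics.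
-/

open Finset Set

variable {ι : Type*} [DecidableEq ι]

lemma add_single_sub_single_mem_box {x : ι → ℝ} (hx : ∀ k, x k ∈ Icc (0 : ℝ) 1)
    {i j : ι} (hij : i ≠ j) {a b : ℝ} (ha : a ∈ Icc 0 (1 - x i)) (hb : b ∈ Icc 0 (x j)) :
    ∀ k, (x + Pi.single i a - Pi.single j b : ι → ℝ) k ∈ Icc (0 : ℝ) 1 := by
  intro k
  obtain ⟨hx0, hx1⟩ := hx k
  simp only [Pi.add_apply, Pi.sub_apply, Set.mem_Icc]
  rcases eq_or_ne k i with rfl | hki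
  · rw [Pi.single_eq_same, Pi.single_eq_of_ne hij]
    constructor <;> linarith [ha.1, ha.2]
  rcases eq_or_ne k j with rfl | hkj
  · rw [Pi.single_eq_same, Pi.single_eq_of_ne hki]
    constructor <;> linarith [hb.1, hb.2]
  · rw [Pi.single_eq_of_ne hki, Pi.single_eq_of_ne hkj]
    constructor <;> linarith

variable [Fintype ι]

lemma sum_mul_add_single_sub_single (c x : ι → ℝ) (i j : ι) (a b : ℝ) :
    ∑ k, c k * (x + Pi.single i a - Pi.single j b : ι → ℝ) k
      = ∑ k, c k * x k + c i * a - c j * b := by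
  simp [mul_add, mul_sub, sum_add_distrib, sum_sub_distrib, Pi.single_apply]

lemma exchange_objective (φ : ℝ → ℝ) (S c x : ι → ℝ) {i j : ι} (hSi : S i ≠ 0) (hSj : S j ≠ 0)
    (t : ℝ) :
    φ (∑ k, S k * (x + Pi.single i (t / S i) - Pi.single j (t / S j) : ι → ℝ) k)
        - ∑ k, c k * (x + Pi.single i (t / S i) - Pi.single j (t / S j) : ι → ℝ) k
      = φ (∑ k, S k * x k) - ∑ k, c k * x k + t * (c j / S j - c i / S i) := by
  rw [sum_mul_add_single_sub_single, sum_mul_add_single_sub_single,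
    mul_div_cancel₀ _ hSi, mul_div_cancel₀ _ hSj, add_sub_cancel_right]
  ring

lemma exists_mem_box_lt_of_fractional_of_div_lt (φ : ℝ → ℝ) (S c : ι → ℝ) (hS : ∀ k, 0 < S k)
    {f : (ι → ℝ) → ℝ} (hf : ∀ x, f x = φ (∑ k, S k * x k) - ∑ k, c k * x k)
    {x : ι → ℝ} (hx : ∀ k, x k ∈ Icc (0 : ℝ) 1) {i j : ι}
    (hi : x i ∈ Ioo (0 : ℝ) 1) (hj : x j ∈ Ioo (0 : ℝ) 1) (hlt : c i / S i < c j / S j) :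
    ∃ y : ι → ℝ, (∀ k, y k ∈ Icc (0 : ℝ) 1) ∧ f x < f y := by
  have hij : i ≠ j := by rintro rfl; exact hlt.false
  set t := min (S i * (1 - x i)) (S j * x j)
  have ht : 0 < t := lt_min (mul_pos (hS i) (by linarith [hi.2])) (mul_pos (hS j) hj.1)
  have hti : t / S i ≤ 1 - x i := (div_le_iff₀' (hS i)).2 (min_le_left _ _)
  have htj : t / S j ≤ x j := (div_le_iff₀' (hS j)).2 (min_le_right _ _)
  refine ⟨x + Pi.single i (t / S i) - Pi.single j (t / S j),
    add_single_sub_single_mem_box hx hij ⟨(div_pos ht (hS i)).le, hti⟩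
      ⟨(div_pos ht (hS j)).le, htj⟩, ?_⟩
  rw [hf, hf, exchange_objective φ S c x (hS i).ne' (hS j).ne']
  linarith [mul_pos ht (sub_pos.2 hlt)]

theorem at_most_one_fractional_coordinate_general
    (n : ℕ)
    (ω β lam S0 : ℝ) (hω : 0 < ω) (hβ : 0 < β)
    (S ψ : Fin n → ℝ) (hS : ∀ i, 0 < S i)
    (g f : (Fin n → ℝ) → ℝ)
    (hg : ∀ x, g x = 1 + S0 + ∑ i, S i * x i)
    (hf : ∀ x, f x = ω * β * Real.log (g x) - ∑ i, (lam + β * ψ i) * x i)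
    (m : Fin n → ℝ) (hm : ∀ i, m i = (β * ψ i + lam) / (ω * β * S i))
    (hdistinct : ∀ i j : Fin n, i ≠ j → m i ≠ m j)
    (x : Fin n → ℝ)
    (hxC : ∀ i, x i ∈ Set.Icc (0:ℝ) 1)
    (hxmax : ∀ y : Fin n → ℝ, (∀ i, y i ∈ Set.Icc (0:ℝ) 1) → f y ≤ f x) :
    ∀ i j : Fin n, x i ∈ Set.Ioo (0:ℝ) 1 → x j ∈ Set.Ioo (0:ℝ) 1 → i = j := by
  have hωβ : 0 < ω * β := mul_pos hω hβ
  have hcost : ∀ k, (lam + β * ψ k) / S k = ω * β * m k := fun k => by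
    rw [hm k]; field_simp [(hS k).ne']; ring
  have hf' : ∀ y, f y = (fun s => ω * β * Real.log (1 + S0 + s)) (∑ k, S k * y k)
      - ∑ k, (lam + β * ψ k) * y k := fun y => by rw [hf, hg]
  have key : ∀ i j, x i ∈ Ioo (0 : ℝ) 1 → x j ∈ Ioo (0 : ℝ) 1 → ¬ m i < m j := by
    intro i j hi hj hlt
    obtain ⟨y, hy, hfy⟩ := exists_mem_box_lt_of_fractional_of_div_lt
      (fun s => ω * β * Real.log (1 + S0 + s)) S (fun k => lam + β * ψ k) hS hf' hxC hi hj
      (by rw [hcost, hcost]; exact mul_lt_mul_of_pos_left hlt hωβ)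
    exact (hxmax y hy).not_gt hfy
  intro i j hi hj
  by_contra hij
  rcases (hdistinct i j hij).lt_or_gt with hlt | hlt
  exacts [key i j hi hj hlt, key j i hj hi hlt]

theorem at_most_one_fractional_coordinate
    (n : ℕ) (hn : 1 ≤ n)
    (ω β lam S0 : ℝ) (hω : 0 < ω) (hβ : 0 < β) (hlam : 0 ≤ lam) (hS0 : 0 ≤ S0)
    (S ψ : Fin n → ℝ) (hS : ∀ i, 0 < S i) (hψ : ∀ i, 0 ≤ ψ i)
    (g f : (Fin n → ℝ) → ℝ)
    (hg : ∀ x, g x = 1 + S0 + ∑ i, S i * x i)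
    (hf : ∀ x, f x = ω * β * Real.log (g x) - ∑ i, (lam + β * ψ i) * x i)
    (m : Fin n → ℝ) (hm : ∀ i, m i = (β * ψ i + lam) / (ω * β * S i))
    (hdistinct : ∀ i j : Fin n, i ≠ j → m i ≠ m j)
    (x : Fin n → ℝ)
    (hxC : ∀ i, x i ∈ Set.Icc (0:ℝ) 1)
    (hxmax : ∀ y : Fin n → ℝ, (∀ i, y i ∈ Set.Icc (0:ℝ) 1) → f y ≤ f x) :
    ∀ i j : Fin n, x i ∈ Set.Ioo (0:ℝ) 1 → x j ∈ Set.Ioo (0:ℝ) 1 → i = j :=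
  at_most_one_fractional_coordinate_general n ω β lam S0 hω hβ S ψ hS g f hg hf m hm hdistinct x hxC
    hxmax
end

section
/- If the metrics m_1, …, m_n are pairwise distinct, then f has a unique maximizer on C. -/
/-! The objective is concave in `x`, and strictly concave in the load `g₀ + S ⬝ᵥ x` because `log`
is, so all maximizers share the same load `G`. Given `G`, the first-order condition along
coordinate `i` forces `x i = 1` when `c i * G < κ * S i` and `x i = 0` when `c i * G > κ * S i`.
Since the ratios `c i / S i` are distinct, at most one coordinate is left undecided, and the load
fixes that one too. -/

open Real Set Function

theorem dotProduct_update {ι α : Type*} [Fintype ι] [DecidableEq ι] [CommRing α]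
    (v x : ι → α) (i : ι) (t : α) :
    v ⬝ᵥ update x i t = v ⬝ᵥ x + v i * (t - x i) := by
  have : update x i t = x + Pi.single i (t - x i) := by
    ext j
    rcases eq_or_ne j i with rfl | hj <;> simp [*]
  rw [this, dotProduct_add, dotProduct_single]

theorem IsMaxOn.hasDerivAt_mul_sub_nonpos {φ : ℝ → ℝ} {s : Set ℝ} {a d t : ℝ}
    (hs : Convex ℝ s) (hmax : IsMaxOn φ s a) (ha : a ∈ s) (ht : t ∈ s)
    (hφ : HasDerivAt φ d a) : d * (t - a) ≤ 0 := by
  have := hmax.localize.hasFDerivWithinAt_nonpos hφ.hasFDerivAt.hasFDerivWithinAt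
    (sub_mem_posTangentConeAt_of_segment_subset (hs.segment_subset ha ht))
  simpa [mul_comm] using this

namespace ApertureSelection

def box (ι : Type*) : Set (ι → ℝ) := univ.pi fun _ => Icc 0 1

theorem convex_box {ι : Type*} : Convex ℝ (box ι) := convex_pi fun _ _ => convex_Icc 0 1

theorem isCompact_box {ι : Type*} : IsCompact (box ι) := isCompact_univ_pi fun _ => isCompact_Icc

variable {ι : Type*} [Fintype ι]

noncomputable def objective (κ g₀ : ℝ) (S c x : ι → ℝ) : ℝ := κ * log (g₀ + S ⬝ᵥ x) - c ⬝ᵥ x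

variable {κ g₀ : ℝ} {S c : ι → ℝ}

theorem add_dotProduct_pos_of_mem_box (hg₀ : 0 < g₀) (hS : ∀ i, 0 ≤ S i) {x : ι → ℝ}
    (hx : x ∈ box ι) :
    0 < g₀ + S ⬝ᵥ x :=
  add_pos_of_pos_of_nonneg hg₀ <| Finset.sum_nonneg fun i _ => mul_nonneg (hS i) (hx i trivial).1

theorem exists_isMaxOn_objective (hg₀ : 0 < g₀) (hS : ∀ i, 0 ≤ S i) :
    ∃ x ∈ box ι, IsMaxOn (objective κ g₀ S c) (box ι) x := by
  refine isCompact_box.exists_isMaxOn ⟨0, fun _ _ => ⟨le_rfl, zero_le_one⟩⟩ ?_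
  have hload : ContinuousOn (fun x => g₀ + S ⬝ᵥ x) (box ι) :=
    (continuous_const.add (continuous_const.dotProduct continuous_id)).continuousOn
  have hlog := hload.log fun x hx => (add_dotProduct_pos_of_mem_box hg₀ hS hx).ne'
  exact (continuousOn_const.mul hlog).sub (continuous_const.dotProduct continuous_id).continuousOn

theorem dotProduct_eq_of_isMaxOn {s : Set (ι → ℝ)} (hκ : 0 < κ) (hs : Convex ℝ s)
    (hpos : ∀ x ∈ s, 0 < g₀ + S ⬝ᵥ x) {a b : ι → ℝ} (ha : a ∈ s) (hb : b ∈ s)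
    (hamax : IsMaxOn (objective κ g₀ S c) s a) (hbmax : IsMaxOn (objective κ g₀ S c) s b) :
    S ⬝ᵥ a = S ⬝ᵥ b := by
  by_contra hne
  set z := (1 / 2 : ℝ) • a + (1 / 2 : ℝ) • b
  have hz : z ∈ s := hs ha hb (by norm_num) (by norm_num) (by norm_num)
  have hlog := strictConcaveOn_log_Ioi.2 (hpos a ha) (hpos b hb) (by simpa using hne)
    (by norm_num : (0 : ℝ) < 1 / 2) (by norm_num : (0 : ℝ) < 1 / 2) (by norm_num)
  have hmid : objective κ g₀ S c a + objective κ g₀ S c b < 2 * objective κ g₀ S c z := by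
    have hzload : g₀ + S ⬝ᵥ z = (1 / 2 : ℝ) • (g₀ + S ⬝ᵥ a) + (1 / 2 : ℝ) • (g₀ + S ⬝ᵥ b) := by
      simp only [z, dotProduct_add, dotProduct_smul, smul_eq_mul]; ring
    have hzlin : c ⬝ᵥ z = (c ⬝ᵥ a + c ⬝ᵥ b) / 2 := by
      simp only [z, dotProduct_add, dotProduct_smul, smul_eq_mul]; ring
    simp only [objective, hzload, hzlin, smul_eq_mul] at hlog ⊢
    nlinarith
  linarith [isMaxOn_iff.1 hamax z hz, isMaxOn_iff.1 hbmax z hz]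

theorem hasDerivAt_objective_update [DecidableEq ι] (x : ι → ℝ) (i : ι)
    (hx : g₀ + S ⬝ᵥ x ≠ 0) :
    HasDerivAt (fun t => objective κ g₀ S c (update x i t))
      (κ * S i / (g₀ + S ⬝ᵥ x) - c i) (x i) := by
  have hline : ∀ v : ι → ℝ, HasDerivAt (fun t => v ⬝ᵥ x + v i * (t - x i)) (v i) (x i) :=
    fun v => by
      simpa using (((hasDerivAt_id (x i)).sub_const (x i)).const_mul (v i)).const_add (v ⬝ᵥ x)
  have hlog := ((hline S).const_add g₀).log (by simpa using hx)
  have h := (hlog.const_mul κ).sub (hline c)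
  rw [sub_self, mul_zero, add_zero, ← mul_div_assoc] at h
  simp only [objective, dotProduct_update]
  exact h

theorem apply_eq_ite_of_isMaxOn [DecidableEq ι] (hg₀ : 0 < g₀) (hS : ∀ i, 0 ≤ S i)
    {x : ι → ℝ} (hx : x ∈ box ι) (hmax : IsMaxOn (objective κ g₀ S c) (box ι) x) {i : ι}
    (hi : c i * (g₀ + S ⬝ᵥ x) ≠ κ * S i) :
    x i = if c i * (g₀ + S ⬝ᵥ x) < κ * S i then 1 else 0 := by
  have hG := add_dotProduct_pos_of_mem_box hg₀ hS hx
  have hcoord : ∀ t ∈ Icc (0 : ℝ) 1, (κ * S i / (g₀ + S ⬝ᵥ x) - c i) * (t - x i) ≤ 0 := by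
    refine fun t ht => IsMaxOn.hasDerivAt_mul_sub_nonpos (convex_Icc 0 1) (fun s hs => ?_)
      (hx i trivial) ht (hasDerivAt_objective_update x i hG.ne')
    simpa using hmax ((update_mem_pi_iff_of_mem hx).2 fun _ => hs)
  split_ifs with hlt
  · have hd : 0 < κ * S i / (g₀ + S ⬝ᵥ x) - c i := by rwa [sub_pos, lt_div_iff₀ hG]
    have := nonpos_of_mul_nonpos_right (hcoord 1 ⟨zero_le_one, le_rfl⟩) hd
    exact le_antisymm (hx i trivial).2 (sub_nonpos.1 this)
  · have hd : κ * S i / (g₀ + S ⬝ᵥ x) - c i < 0 := by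
      rw [sub_neg, div_lt_iff₀ hG]; exact lt_of_le_of_ne (not_lt.1 hlt) hi.symm
    have := nonneg_of_mul_nonpos_right (hcoord 0 ⟨le_rfl, zero_le_one⟩) hd
    exact le_antisymm (sub_nonneg.1 this) (hx i trivial).1

theorem eq_of_dotProduct_eq_of_forall_ne {R : Type*} [CommRing R] [IsDomain R]
    {v a b : ι → R} {i : ι} (hv : v i ≠ 0) (h : v ⬝ᵥ a = v ⬝ᵥ b) (hab : ∀ j ≠ i, a j = b j) :
    a = b := by
  classical
  have hsub : a - b = Pi.single i (a i - b i) := by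
    ext j
    rcases eq_or_ne j i with rfl | hj
    · simp
    · simp [hj, hab j hj]
  have : v i * (a i - b i) = 0 := by
    rw [← dotProduct_single, ← hsub, dotProduct_sub, h, sub_self]
  rw [← sub_eq_zero, hsub, (mul_eq_zero.1 this).resolve_left hv, Pi.single_zero]

theorem existsUnique_isMaxOn_objective (hκ : 0 < κ) (hg₀ : 0 < g₀) (hS : ∀ i, 0 < S i)
    (hc : Injective fun i => c i / S i) :
    ∃! x, x ∈ box ι ∧ IsMaxOn (objective κ g₀ S c) (box ι) x := by
  classical
  have hS' i := (hS i).le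
  obtain ⟨x, hx, hmax⟩ := exists_isMaxOn_objective (κ := κ) (c := c) hg₀ hS'
  refine ⟨x, ⟨hx, hmax⟩, fun y ⟨hy, hymax⟩ => ?_⟩
  have hload := dotProduct_eq_of_isMaxOn hκ convex_box
    (fun _ => add_dotProduct_pos_of_mem_box hg₀ hS') hy hx hymax hmax
  have hagree : ∀ i, c i * (g₀ + S ⬝ᵥ y) ≠ κ * S i → y i = x i := fun i hi => by
    rw [apply_eq_ite_of_isMaxOn hg₀ hS' hy hymax hi,
      apply_eq_ite_of_isMaxOn hg₀ hS' hx hmax (hload ▸ hi), hload]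
  by_cases hcrit : ∃ i, c i * (g₀ + S ⬝ᵥ y) = κ * S i
  · obtain ⟨i, hi⟩ := hcrit
    -- any other undecided coordinate `j` would have `c j / S j = κ / (g₀ + S ⬝ᵥ y) = c i / S i`
    refine eq_of_dotProduct_eq_of_forall_ne (hS i).ne' hload fun j hj =>
      hagree j fun hj' => hj (hc ?_)
    rw [div_eq_div_iff (hS j).ne' (hS i).ne']
    refine mul_right_cancel₀ (add_dotProduct_pos_of_mem_box hg₀ hS' hy).ne' ?_
    linear_combination S i * hj' - S j * hi
  · exact funext fun i => hagree i (not_exists.1 hcrit i)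

end ApertureSelection

theorem unique_maximizer_general
    (n : ℕ)
    (ω β lam S0 : ℝ) (hω : 0 < ω) (hβ : 0 < β) (hS0 : 0 ≤ S0)
    (S ψ : Fin n → ℝ) (hS : ∀ i, 0 < S i)
    (g f : (Fin n → ℝ) → ℝ)
    (hg : ∀ x, g x = 1 + S0 + ∑ i, S i * x i)
    (hf : ∀ x, f x = ω * β * Real.log (g x) - ∑ i, (lam + β * ψ i) * x i)
    (m : Fin n → ℝ) (hm : ∀ i, m i = (β * ψ i + lam) / (ω * β * S i))
    (hdistinct : ∀ i j : Fin n, i ≠ j → m i ≠ m j) :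
    ∃! x : Fin n → ℝ, (∀ i, x i ∈ Set.Icc (0:ℝ) 1) ∧
      ∀ y : Fin n → ℝ, (∀ i, y i ∈ Set.Icc (0:ℝ) 1) → f y ≤ f x := by
  have hm' i : m i = (lam + β * ψ i) / S i / (ω * β) := by
    rw [hm, div_div, add_comm, mul_comm (S i)]
  have hc : Injective fun i => (lam + β * ψ i) / S i := fun i j hij => by
    by_contra hne
    exact hdistinct i j hne (by rw [hm', hm']; exact congrArg (· / (ω * β)) hij)
  have hfo : f = ApertureSelection.objective (ω * β) (1 + S0) S fun i => lam + β * ψ i :=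
    funext fun x => by rw [hf, hg]; rfl
  simpa only [hfo, ApertureSelection.box, isMaxOn_iff, mem_univ_pi] using
    ApertureSelection.existsUnique_isMaxOn_objective (mul_pos hω hβ) (by linarith) hS hc

theorem unique_maximizer
    (n : ℕ) (hn : 1 ≤ n)
    (ω β lam S0 : ℝ) (hω : 0 < ω) (hβ : 0 < β) (hlam : 0 ≤ lam) (hS0 : 0 ≤ S0)
    (S ψ : Fin n → ℝ) (hS : ∀ i, 0 < S i) (hψ : ∀ i, 0 ≤ ψ i)
    (g f : (Fin n → ℝ) → ℝ)
    (hg : ∀ x, g x = 1 + S0 + ∑ i, S i * x i)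
    (hf : ∀ x, f x = ω * β * Real.log (g x) - ∑ i, (lam + β * ψ i) * x i)
    (m : Fin n → ℝ) (hm : ∀ i, m i = (β * ψ i + lam) / (ω * β * S i))
    (hdistinct : ∀ i j : Fin n, i ≠ j → m i ≠ m j) :
    ∃! x : Fin n → ℝ, (∀ i, x i ∈ Set.Icc (0:ℝ) 1) ∧
      ∀ y : Fin n → ℝ, (∀ i, y i ∈ Set.Icc (0:ℝ) 1) → f y ≤ f x :=
  unique_maximizer_general n ω β lam S0 hω hβ hS0 S ψ hS g f hg hf m hm hdistinct
end

section
/- Assume the metrics are strictly increasing: m_1 < m_2 < … < m_n. Let k* be the largest index i ∈ {1,…,n} such that 1/(1 + S_0 + Σ_{p=1}^{i} S_p) > m_i, with k* = 0 if no such index exists. Define x̂ ∈ [0,1]^n by: x̂_i = 1 for i ≤ k*; if k* < n then x̂_{k*+1} = max{0, min{1, (1/m_{k*+1} − (1 + S_0 + Σ_{p=1}^{k*} S_p))/S_{k*+1}}}; and x̂_i = 0 for i > k*+1. Then x̂ is a global maximizer of f on C. (This is the output of the aperture-selection step of the LiquidMAAS algorithm.) -/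
/-!
The objective is concave (a logarithm of an affine function minus a linear one), so `x̂` is a
global maximizer on the box once it satisfies the first-order conditions there. The partial
derivative at `x̂` is `ω β Sᵢ (τ - mᵢ)` with level `τ = 1 / g x̂`, so these say that `τ ≥ mᵢ`
where `x̂ᵢ = 1`, `τ ≤ mᵢ` where `x̂ᵢ = 0` and `τ = mᵢ` where `x̂ᵢ` is fractional. As the metrics
increase, it suffices that `m_{k*} ≤ τ ≤ m_{k*+1}`: the clamped formula for `x̂_{k*+1}` raises
the level to `m_{k*+1}` unless slot `k*+1` stays empty, and the maximality of `k*` prevents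
the full slot from overshooting.
-/

open Finset

lemma Real.log_le_log_add_sub_div {a b : ℝ} (ha : 0 < a) (hb : 0 < b) :
    Real.log b ≤ Real.log a + (b - a) / a := by
  have h := Real.log_le_sub_one_of_pos (div_pos hb ha)
  rw [Real.log_div hb.ne' ha.ne', div_sub_one ha.ne'] at h
  linarith

/-- The concave objective lies below its tangent plane at `x`. -/
theorem log_affine_sub_linear_le_of_sign {ι : Type*} (s : Finset ι) {κ a : ℝ} (hκ : 0 ≤ κ)
    (S c x y : ι → ℝ) (hx : 0 < a + ∑ i ∈ s, S i * x i) (hy : 0 < a + ∑ i ∈ s, S i * y i)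
    (hsign : ∀ i ∈ s, (κ * S i / (a + ∑ j ∈ s, S j * x j) - c i) * (y i - x i) ≤ 0) :
    κ * Real.log (a + ∑ i ∈ s, S i * y i) - ∑ i ∈ s, c i * y i ≤
      κ * Real.log (a + ∑ i ∈ s, S i * x i) - ∑ i ∈ s, c i * x i := by
  set G := a + ∑ i ∈ s, S i * x i
  have htangent := mul_le_mul_of_nonneg_left (Real.log_le_log_add_sub_div hx hy) hκ
  have hlinear : κ * ((a + ∑ i ∈ s, S i * y i - G) / G) -
      (∑ i ∈ s, c i * y i - ∑ i ∈ s, c i * x i) =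
      ∑ i ∈ s, (κ * S i / G - c i) * (y i - x i) := by
    simp only [G, add_sub_add_left_eq_sub, ← sum_sub_distrib, sum_div, mul_sum]
    refine sum_congr rfl fun i _ => ?_
    ring
  linarith [sum_nonpos hsign]

lemma mul_sub_nonpos_of_box_kkt {d x y : ℝ} (hy : y ∈ Set.Icc (0 : ℝ) 1)
    (h : (x = 1 ∧ 0 ≤ d) ∨ (x = 0 ∧ d ≤ 0) ∨ d = 0) : d * (y - x) ≤ 0 := by
  rcases h with ⟨rfl, hd⟩ | ⟨rfl, hd⟩ | rfl
  · exact mul_nonpos_of_nonneg_of_nonpos hd (by linarith [hy.2])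
  · exact mul_nonpos_of_nonpos_of_nonneg hd (by linarith [hy.1])
  · rw [zero_mul]

lemma max_zero_min_one_mem_Icc (r : ℝ) : max 0 (min 1 r) ∈ Set.Icc (0 : ℝ) 1 :=
  ⟨le_max_left _ _, max_le zero_le_one (min_le_left _ _)⟩

lemma clamp_fill_eq_zero_or_one_div_eq {A S μ : ℝ} (hA : 0 < A) (hS : 0 < S) (hμ : 1 / (A + S) ≤ μ) :
    (max 0 (min 1 ((1 / μ - A) / S)) = 0 ∧ 1 / A ≤ μ) ∨
      1 / (A + S * max 0 (min 1 ((1 / μ - A) / S))) = μ := by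
  have hμ_pos : 0 < μ := lt_of_lt_of_le (by positivity) hμ
  set r := (1 / μ - A) / S with hr
  rcases le_or_gt r 0 with hr0 | hr0
  · left
    refine ⟨max_eq_left ((min_le_right 1 r).trans hr0), ?_⟩
    rw [one_div_le hA hμ_pos]
    linarith [(div_le_iff₀ hS).mp hr0]
  · right
    rcases le_or_gt 1 r with hr1 | hr1
    · rw [min_eq_left hr1, max_eq_right zero_le_one, mul_one]
      refine le_antisymm hμ ?_
      rw [le_one_div hμ_pos (by positivity)]
      linarith [(le_div_iff₀ hS).mp hr1]
    · rw [min_eq_right hr1.le, max_eq_right hr0.le, hr, mul_div_cancel₀ _ hS.ne',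
        add_sub_cancel, one_div_one_div]

def IsThreshold (n k : ℕ) (t : ℝ) (x : ℕ → ℝ) : Prop :=
  ∀ i, 1 ≤ i → i ≤ n → x i = if i ≤ k then 1 else if i = k + 1 then t else 0

section Threshold

variable {n k : ℕ} {t : ℝ} {x : ℕ → ℝ}

lemma IsThreshold.mem_box (hx : IsThreshold n k t x) (ht : t ∈ Set.Icc (0 : ℝ) 1) :
    ∀ i ∈ Icc 1 n, x i ∈ Set.Icc (0 : ℝ) 1 := by
  intro i hi
  obtain ⟨hi1, hin⟩ := mem_Icc.mp hi
  rw [hx i hi1 hin]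
  split_ifs
  exacts [⟨zero_le_one, le_rfl⟩, ht, ⟨le_rfl, zero_le_one⟩]

lemma IsThreshold.sum_mul_of_lt (hx : IsThreshold n k t x) (S : ℕ → ℝ) (hk : k < n) :
    ∑ i ∈ Icc 1 n, S i * x i = ∑ i ∈ Icc 1 k, S i + S (k + 1) * t := by
  rw [← sum_subset (Icc_subset_Icc_right hk) fun i hi hi' => ?_,
    sum_Icc_succ_top (by omega), hx (k + 1) (by omega) hk, if_neg (by omega), if_pos rfl]
  · refine congrArg (· + _) (sum_congr rfl fun i hi => ?_)
    obtain ⟨hi1, hik⟩ := mem_Icc.mp hi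
    rw [hx i hi1 (by omega), if_pos hik, mul_one]
  · obtain ⟨hi1, hin⟩ := mem_Icc.mp hi
    have hki : k + 1 < i := by
      by_contra! h
      exact hi' (mem_Icc.mpr ⟨hi1, h⟩)
    rw [hx i hi1 hin, if_neg (by omega), if_neg (by omega), mul_zero]

lemma IsThreshold.sum_mul_self (hx : IsThreshold n n t x) (S : ℕ → ℝ) :
    ∑ i ∈ Icc 1 n, S i * x i = ∑ i ∈ Icc 1 n, S i := by
  refine sum_congr rfl fun i hi => ?_
  obtain ⟨hi1, hin⟩ := mem_Icc.mp hi
  rw [hx i hi1 hin, if_pos hin, mul_one]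

lemma IsThreshold.mul_sub_nonpos {τ : ℝ} {m : ℕ → ℝ} (hx : IsThreshold n k t x)
    (hmono : ∀ i j : ℕ, 1 ≤ i → i < j → j ≤ n → m i < m j) (hk : k ≤ n)
    (hbelow : 1 ≤ k → m k ≤ τ) (habove : k < n → τ ≤ m (k + 1) ∧ (t = 0 ∨ τ = m (k + 1))) :
    ∀ i ∈ Icc 1 n, ∀ y ∈ Set.Icc (0 : ℝ) 1, (τ - m i) * (y - x i) ≤ 0 := by
  intro i hi y hy
  obtain ⟨hi1, hin⟩ := mem_Icc.mp hi
  refine mul_sub_nonpos_of_box_kkt hy ?_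
  rw [hx i hi1 hin]
  rcases lt_trichotomy i (k + 1) with hik | rfl | hki
  · have hmi : m i ≤ m k := by
      rcases (show i ≤ k by omega).eq_or_lt with rfl | h
      exacts [le_rfl, (hmono i k hi1 h hk).le]
    exact Or.inl ⟨if_pos (by omega), by linarith [hbelow (by omega)]⟩
  · rw [if_neg (by omega), if_pos rfl]
    obtain ⟨hτ, ht | hτ'⟩ := habove (by omega)
    exacts [Or.inr (Or.inl ⟨ht, by linarith⟩), Or.inr (Or.inr (by linarith))]
  · have hmi := hmono (k + 1) i (by omega) hki hin
    rw [if_neg (by omega), if_neg (by omega)]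
    exact Or.inr (Or.inl ⟨rfl, by linarith [(habove (by omega)).1]⟩)

end Threshold

lemma aperture_mul_sub_nonpos {n k : ℕ} {S0 : ℝ} {S m x : ℕ → ℝ} (hS0 : 0 ≤ S0)
    (hS : ∀ i ∈ Icc 1 n, 0 < S i) (hmono : ∀ i j : ℕ, 1 ≤ i → i < j → j ≤ n → m i < m j)
    (hk : k ≤ n)
    (hk_max : ∀ i, 1 ≤ i → i ≤ n → 1 / (1 + S0 + ∑ p ∈ Icc 1 i, S p) > m i → i ≤ k)
    (hk_prop : k = 0 ∨ (1 ≤ k ∧ 1 / (1 + S0 + ∑ p ∈ Icc 1 k, S p) > m k))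
    (hx : IsThreshold n k
      (max 0 (min 1 ((1 / m (k + 1) - (1 + S0 + ∑ p ∈ Icc 1 k, S p)) / S (k + 1)))) x) :
    ∀ i ∈ Icc 1 n, ∀ y ∈ Set.Icc (0 : ℝ) 1,
      (1 / (1 + S0 + ∑ j ∈ Icc 1 n, S j * x j) - m i) * (y - x i) ≤ 0 := by
  have hbelow (h : 1 ≤ k) : m k ≤ 1 / (1 + S0 + ∑ p ∈ Icc 1 k, S p) :=
    (hk_prop.resolve_left (by omega)).2.le
  rcases hk.lt_or_eq with hkn | rfl
  · set A := 1 + S0 + ∑ p ∈ Icc 1 k, S p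
    have hA : 0 < A := by
      have := sum_nonneg fun p hp => (hS p (Icc_subset_Icc_right hk hp)).le
      linarith
    have hfull : 1 / (A + S (k + 1)) ≤ m (k + 1) := by
      refine not_lt.mp fun h => ?_
      have := hk_max (k + 1) (by omega) hkn (by rwa [sum_Icc_succ_top (by omega), ← add_assoc])
      omega
    rw [hx.sum_mul_of_lt S hkn, ← add_assoc]
    rcases clamp_fill_eq_zero_or_one_div_eq hA (hS _ (mem_Icc.mpr ⟨by omega, hkn⟩)) hfull with
      ⟨ht, hlevel⟩ | hlevel
    · rw [ht, mul_zero, add_zero]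
      exact hx.mul_sub_nonpos hmono hk hbelow fun _ => ⟨hlevel, Or.inl ht⟩
    · rw [hlevel]
      exact hx.mul_sub_nonpos hmono hk (fun h => (hmono k (k + 1) h (by omega) hkn).le)
        fun _ => ⟨le_rfl, Or.inr rfl⟩
  · rw [hx.sum_mul_self S]
    exact hx.mul_sub_nonpos hmono le_rfl hbelow fun h => absurd h (lt_irrefl k)

theorem liquidmaas_aperture_selection_optimal_general
    (n : ℕ)
    (ω β lam S0 : ℝ) (hω : 0 < ω) (hβ : 0 < β) (hS0 : 0 ≤ S0)
    (S ψ : ℕ → ℝ)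
    (hS : ∀ i ∈ Finset.Icc 1 n, 0 < S i)
    (g f : (ℕ → ℝ) → ℝ)
    (hg : ∀ x, g x = 1 + S0 + ∑ i ∈ Finset.Icc 1 n, S i * x i)
    (hf : ∀ x, f x = ω * β * Real.log (g x) - ∑ i ∈ Finset.Icc 1 n, (lam + β * ψ i) * x i)
    (m : ℕ → ℝ) (hm : ∀ i, m i = (β * ψ i + lam) / (ω * β * S i))
    (hmono : ∀ i j : ℕ, 1 ≤ i → i < j → j ≤ n → m i < m j)
    (kstar : ℕ) (hk_le : kstar ≤ n)
    (hk_max : ∀ i, 1 ≤ i → i ≤ n →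
      1 / (1 + S0 + ∑ p ∈ Finset.Icc 1 i, S p) > m i → i ≤ kstar)
    (hk_prop : kstar = 0 ∨
      (1 ≤ kstar ∧ 1 / (1 + S0 + ∑ p ∈ Finset.Icc 1 kstar, S p) > m kstar))
    (xhat : ℕ → ℝ)
    (hxhat : ∀ i, 1 ≤ i → i ≤ n → xhat i =
      if i ≤ kstar then 1
      else if i = kstar + 1 then
        max 0 (min 1
          ((1 / m (kstar + 1) - (1 + S0 + ∑ p ∈ Finset.Icc 1 kstar, S p)) / S (kstar + 1)))
      else 0) :
    (∀ i ∈ Finset.Icc 1 n, xhat i ∈ Set.Icc (0:ℝ) 1) ∧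
    ∀ y : ℕ → ℝ, (∀ i ∈ Finset.Icc 1 n, y i ∈ Set.Icc (0:ℝ) 1) → f y ≤ f xhat := by
  have hxhat_mem := IsThreshold.mem_box hxhat (max_zero_min_one_mem_Icc _)
  refine ⟨hxhat_mem, fun y hy => ?_⟩
  have hload_pos (z : ℕ → ℝ) (hz : ∀ i ∈ Icc 1 n, z i ∈ Set.Icc (0 : ℝ) 1) :
      0 < 1 + S0 + ∑ i ∈ Icc 1 n, S i * z i := by
    have := sum_nonneg fun i hi => mul_nonneg (hS i hi).le (hz i hi).1
    linarith
  have hkkt := aperture_mul_sub_nonpos hS0 hS hmono hk_le hk_max hk_prop hxhat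
  rw [hf, hf, hg, hg]
  refine log_affine_sub_linear_le_of_sign _ (by positivity) _ _ _ _ (hload_pos _ hxhat_mem)
    (hload_pos _ hy) fun i hi => ?_
  have hSi := hS i hi
  have hgrad : ω * β * S i / (1 + S0 + ∑ j ∈ Icc 1 n, S j * xhat j) - (lam + β * ψ i) =
      ω * β * S i * (1 / (1 + S0 + ∑ j ∈ Icc 1 n, S j * xhat j) - m i) := by
    rw [hm]
    field_simp
    ring
  rw [hgrad, mul_assoc]
  exact mul_nonpos_of_nonneg_of_nonpos (by positivity) (hkkt i hi (y i) (hy i hi))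

theorem liquidmaas_aperture_selection_optimal
    (n : ℕ) (hn : 1 ≤ n)
    (ω β lam S0 : ℝ) (hω : 0 < ω) (hβ : 0 < β) (hlam : 0 ≤ lam) (hS0 : 0 ≤ S0)
    (S ψ : ℕ → ℝ)
    (hS : ∀ i ∈ Finset.Icc 1 n, 0 < S i) (hψ : ∀ i ∈ Finset.Icc 1 n, 0 ≤ ψ i)
    (g f : (ℕ → ℝ) → ℝ)
    (hg : ∀ x, g x = 1 + S0 + ∑ i ∈ Finset.Icc 1 n, S i * x i)
    (hf : ∀ x, f x = ω * β * Real.log (g x) - ∑ i ∈ Finset.Icc 1 n, (lam + β * ψ i) * x i)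
    (m : ℕ → ℝ) (hm : ∀ i, m i = (β * ψ i + lam) / (ω * β * S i))
    (hmono : ∀ i j : ℕ, 1 ≤ i → i < j → j ≤ n → m i < m j)
    (kstar : ℕ) (hk_le : kstar ≤ n)
    (hk_max : ∀ i, 1 ≤ i → i ≤ n →
      1 / (1 + S0 + ∑ p ∈ Finset.Icc 1 i, S p) > m i → i ≤ kstar)
    (hk_prop : kstar = 0 ∨
      (1 ≤ kstar ∧ 1 / (1 + S0 + ∑ p ∈ Finset.Icc 1 kstar, S p) > m kstar))
    (xhat : ℕ → ℝ)
    (hxhat : ∀ i, 1 ≤ i → i ≤ n → xhat i =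
      if i ≤ kstar then 1
      else if i = kstar + 1 then
        max 0 (min 1
          ((1 / m (kstar + 1) - (1 + S0 + ∑ p ∈ Finset.Icc 1 kstar, S p)) / S (kstar + 1)))
      else 0) :
    (∀ i ∈ Finset.Icc 1 n, xhat i ∈ Set.Icc (0:ℝ) 1) ∧
    ∀ y : ℕ → ℝ, (∀ i ∈ Finset.Icc 1 n, y i ∈ Set.Icc (0:ℝ) 1) → f y ≤ f xhat :=
  liquidmaas_aperture_selection_optimal_general n ω β lam S0 hω hβ hS0 S ψ hS g f hg hf m hm hmono
    kstar hk_le hk_max hk_prop xhat hxhat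
end

section
/- Among two helper cells offering equal SINR, the less busy (lower-priced) cell is preferred: if i ≠ j are indices with S_i = S_j and ψ_i < ψ_j, then every maximizer x* of f on C satisfies x*_i ≥ x*_j. -/
/- STATEMENT 10: among two helper cells offering equal SINR, the less busy
   (lower-priced) cell is preferred: if S_i = S_j and ψ_i < ψ_j, then every
   maximizer x* of f on C = [0,1]^n satisfies x*_i ≥ x*_j. -/
theorem less_busy_cell_preferred
    (n : ℕ) (hn : 1 ≤ n)
    (ω β lam S0 : ℝ) (hω : 0 < ω) (hβ : 0 < β) (hlam : 0 ≤ lam) (hS0 : 0 ≤ S0)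
    (S ψ : Fin n → ℝ) (hS : ∀ i, 0 < S i) (hψ : ∀ i, 0 ≤ ψ i)
    (g f : (Fin n → ℝ) → ℝ)
    (hg : ∀ x, g x = 1 + S0 + ∑ i, S i * x i)
    (hf : ∀ x, f x = ω * β * Real.log (g x) - ∑ i, (lam + β * ψ i) * x i)
    (i j : Fin n) (hij : i ≠ j) (hSij : S i = S j) (hψij : ψ i < ψ j)
    (x : Fin n → ℝ)
    (hxC : ∀ k, x k ∈ Set.Icc (0:ℝ) 1)
    (hxmax : ∀ y : Fin n → ℝ, (∀ k, y k ∈ Set.Icc (0:ℝ) 1) → f y ≤ f x) :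
    x j ≤ x i := by
  by_contra hcon
  push_neg at hcon
  set e := Equiv.swap i j with he
  set y : Fin n → ℝ := fun k => x (e k) with hy
  have hyC : ∀ k, y k ∈ Set.Icc (0:ℝ) 1 := fun k => hxC (e k)
  have hee : ∀ k, e (e k) = k := fun k => Equiv.swap_apply_self i j k
  have hSe : ∀ k, S (e k) = S k := by
    intro k
    rcases eq_or_ne k i with rfl | hki
    · simp [he, Equiv.swap_apply_left, hSij]
    rcases eq_or_ne k j with rfl | hkj
    · simp [he, Equiv.swap_apply_right, hSij]
    · simp [he, Equiv.swap_apply_of_ne_of_ne hki hkj]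
  have hgy : g y = g x := by
    rw [hg, hg]
    congr 1
    exact Fintype.sum_equiv e _ _ (fun k => by rw [hSe k])
  have hcosty : ∑ k, (lam + β * ψ k) * y k = ∑ k, (lam + β * ψ (e k)) * x k := by
    exact Fintype.sum_equiv e _ _ (fun k => by rw [hee k])
  have hdiff : ∑ k, (lam + β * ψ (e k)) * x k - ∑ k, (lam + β * ψ k) * x k
      = β * (ψ j - ψ i) * x i + β * (ψ i - ψ j) * x j := by
    rw [← Finset.sum_sub_distrib]
    have hsub : (∑ k, ((lam + β * ψ (e k)) * x k - (lam + β * ψ k) * x k))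
        = ∑ k ∈ ({i, j} : Finset (Fin n)),
            ((lam + β * ψ (e k)) * x k - (lam + β * ψ k) * x k) := by
      refine (Finset.sum_subset (Finset.subset_univ _) ?_).symm
      intro k _ hk
      simp only [Finset.mem_insert, Finset.mem_singleton, not_or] at hk
      rw [he, Equiv.swap_apply_of_ne_of_ne hk.1 hk.2]
      ring
    rw [hsub, Finset.sum_pair hij, he, Equiv.swap_apply_left, Equiv.swap_apply_right]
    ring
  have hle := hxmax y hyC
  rw [hf, hf, hgy, hcosty] at hle
  have hxi := hxC i
  nlinarith [hle, hdiff, mul_pos hβ (sub_pos.mpr hψij), sub_pos.mpr hcon]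
end

section
/- The active set of an optimal solution is filled in order of increasing metric (Part I of the aperture-structure theorem): if x* is a maximizer of f on C and i, j are indices with m_i < m_j and x*_j > 0, then x*_i = 1. -/
/- STATEMENT 11: the active set of an optimal solution is filled in order of
   increasing metric: if x* maximizes f on C = [0,1]^n and m_i < m_j with
   x*_j > 0, then x*_i = 1. -/
theorem active_set_filled_in_metric_order
    (n : ℕ) (hn : 1 ≤ n)
    (ω β lam S0 : ℝ) (hω : 0 < ω) (hβ : 0 < β) (hlam : 0 ≤ lam) (hS0 : 0 ≤ S0)
    (S ψ : Fin n → ℝ) (hS : ∀ i, 0 < S i) (hψ : ∀ i, 0 ≤ ψ i)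
    (g f : (Fin n → ℝ) → ℝ)
    (hg : ∀ x, g x = 1 + S0 + ∑ i, S i * x i)
    (hf : ∀ x, f x = ω * β * Real.log (g x) - ∑ i, (lam + β * ψ i) * x i)
    (m : Fin n → ℝ) (hm : ∀ i, m i = (β * ψ i + lam) / (ω * β * S i))
    (x : Fin n → ℝ)
    (hxC : ∀ k, x k ∈ Set.Icc (0:ℝ) 1)
    (hxmax : ∀ y : Fin n → ℝ, (∀ k, y k ∈ Set.Icc (0:ℝ) 1) → f y ≤ f x)
    (i j : Fin n) (hmij : m i < m j) (hxj : 0 < x j) :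
    x i = 1 := by
  by_contra hxi
  have hxi1 : x i < 1 := lt_of_le_of_ne (hxC i).2 hxi
  have hij : i ≠ j := by
    rintro rfl; exact lt_irrefl _ hmij
  set t : ℝ := min (S i * (1 - x i)) (S j * x j) with ht_def
  have ht : 0 < t :=
    lt_min (mul_pos (hS i) (by linarith)) (mul_pos (hS j) hxj)
  have hti : t ≤ S i * (1 - x i) := min_le_left _ _
  have htj : t ≤ S j * x j := min_le_right _ _
  have hSi := hS i
  have hSj := hS j
  set y : Fin n → ℝ := fun k =>
    x k + (if k = i then t / S i else 0) - (if k = j then t / S j else 0) with hy_def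
  have hyC : ∀ k, y k ∈ Set.Icc (0:ℝ) 1 := by
    intro k
    have hk := hxC k
    simp only [hy_def, Set.mem_Icc] at *
    by_cases hki : k = i
    · subst hki
      rw [if_pos rfl, if_neg hij]
      have h1 : t / S k ≤ 1 - x k := by
        rw [div_le_iff₀ hSi]; nlinarith
      constructor
      · have : 0 ≤ t / S k := le_of_lt (div_pos ht hSi)
        linarith
      · linarith
    · rw [if_neg hki]
      by_cases hkj : k = j
      · subst hkj
        rw [if_pos rfl]
        have h1 : t / S k ≤ x k := by
          rw [div_le_iff₀ hSj]; nlinarith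
        have : 0 ≤ t / S k := le_of_lt (div_pos ht hSj)
        constructor <;> linarith
      · rw [if_neg hkj]
        constructor <;> linarith [hk.1, hk.2]
  -- g is unchanged
  have hgy : g y = g x := by
    rw [hg, hg]
    have hsum : ∀ k, S k * y k
        = S k * x k + (if k = i then t else 0) - (if k = j then t else 0) := by
      intro k
      simp only [hy_def]
      by_cases hki : k = i
      · subst hki
        rw [if_pos rfl, if_pos rfl, if_neg hij, if_neg hij]
        field_simp
        ring
      · rw [if_neg hki, if_neg hki]
        by_cases hkj : k = j
        · subst hkj
          rw [if_pos rfl, if_pos rfl]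
          field_simp
          ring
        · rw [if_neg hkj, if_neg hkj]; ring
    simp only [hsum, Finset.sum_sub_distrib, Finset.sum_add_distrib,
      Finset.sum_ite_eq', Finset.mem_univ, if_true]
    ring
  -- cost sum
  have hcost : ∑ k, (lam + β * ψ k) * y k
      = (∑ k, (lam + β * ψ k) * x k)
        + (lam + β * ψ i) * (t / S i) - (lam + β * ψ j) * (t / S j) := by
    have hsum : ∀ k, (lam + β * ψ k) * y k
        = (lam + β * ψ k) * x k + (if k = i then (lam + β * ψ i) * (t / S i) else 0)
          - (if k = j then (lam + β * ψ j) * (t / S j) else 0) := by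
      intro k
      simp only [hy_def]
      by_cases hki : k = i
      · subst hki
        rw [if_pos rfl, if_pos rfl, if_neg hij, if_neg hij]
        ring
      · rw [if_neg hki, if_neg hki]
        by_cases hkj : k = j
        · subst hkj
          rw [if_pos rfl, if_pos rfl]; ring
        · rw [if_neg hkj, if_neg hkj]; ring
    simp only [hsum, Finset.sum_sub_distrib, Finset.sum_add_distrib,
      Finset.sum_ite_eq', Finset.mem_univ, if_true]
  have hlt : (lam + β * ψ i) * (t / S i) < (lam + β * ψ j) * (t / S j) := by
    have hmi := hm i
    have hmj := hm j
    rw [hmi, hmj] at hmij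
    rw [div_lt_div_iff₀ (by positivity) (by positivity)] at hmij
    rw [← mul_div_assoc, ← mul_div_assoc, div_lt_div_iff₀ hSi hSj]
    have hωβ : 0 < ω * β := mul_pos hω hβ
    have h1 : (ω * β) * ((β * ψ i + lam) * S j) < (ω * β) * ((β * ψ j + lam) * S i) := by
      nlinarith
    have h2 : (β * ψ i + lam) * S j < (β * ψ j + lam) * S i :=
      lt_of_mul_lt_mul_left h1 (le_of_lt hωβ)
    nlinarith [mul_lt_mul_of_pos_right h2 ht]
  have hfy : f x < f y := by
    rw [hf y, hf x, hgy, hcost]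
    linarith
  exact absurd (hxmax y hyC) (not_le.mpr hfy)
end
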